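/- Let u be inner, P_u the projection onto K_u, and D_u = (I − P_u) M_z restricted to K_u^⊥ (the dual of the compressed shift). Then for every f ∈ K_u^⊥, D_u f = z f − conj(φ_f(0))·k_0^u, where φ_f = conj(z)·conj(P^− f), P^− is the projection onto conj(H^2_0), and k_0^u = 1 − conj(u(0))·u is the reproducing kernel of K_u at 0. -/

import Mathlib

open MeasureTheory Complex AddCircle

noncomputable section

namespace Paper

/-- The period `2π`. -/
abbrev T : ℝ := 2 * Real.pi

instance : Fact (0 < T) := ⟨by positivity⟩

/-- Normalized Lebesgue (Haar) measure on the circle. -/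
abbrev μ : Measure (AddCircle T) := haarAddCircle

/-- The space `L²(𝕋, dm)`. -/
abbrev L2 : Type := Lp ℂ 2 μ

lemma memLp_mul {u : AddCircle T → ℂ} (hm : AEStronglyMeasurable u μ)
    (hb : ∀ᵐ x ∂μ, ‖u x‖ ≤ 1) (f : L2) :
    MemLp (fun x => u x * (f : AddCircle T → ℂ) x) 2 μ := by
  refine (Lp.memLp f).of_le (hm.mul (Lp.aestronglyMeasurable f)) ?_
  filter_upwards [hb] with x hx
  calc ‖u x * (f : AddCircle T → ℂ) x‖ = ‖u x‖ * ‖(f : AddCircle T → ℂ) x‖ := norm_mul _ _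
    _ ≤ 1 * ‖(f : AddCircle T → ℂ) x‖ := by gcongr
    _ = ‖(f : AddCircle T → ℂ) x‖ := one_mul _

/-- Multiplication by a measurable function bounded by `1`, as a bounded operator on `L²`. -/
def mulCLM (u : AddCircle T → ℂ) (hm : AEStronglyMeasurable u μ)
    (hb : ∀ᵐ x ∂μ, ‖u x‖ ≤ 1) : L2 →L[ℂ] L2 :=
  LinearMap.mkContinuous
    { toFun := fun f => (memLp_mul hm hb f).toLp _
      map_add' := fun f g => by
        show MemLp.toLp _ (memLp_mul hm hb (f + g)) = _
        have h : (fun x => u x * ((f + g : L2) : AddCircle T → ℂ) x)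
            =ᵐ[μ] (fun x => u x * (f : AddCircle T → ℂ) x)
              + (fun x => u x * (g : AddCircle T → ℂ) x) := by
          filter_upwards [Lp.coeFn_add f g] with x hx
          simp only [Pi.add_apply, hx, mul_add]
        rw [MemLp.toLp_congr (memLp_mul hm hb (f + g))
          ((memLp_mul hm hb f).add (memLp_mul hm hb g)) h, MemLp.toLp_add]
      map_smul' := fun c f => by
        have h : (fun x => u x * ((c • f : L2) : AddCircle T → ℂ) x)
            =ᵐ[μ] c • (fun x => u x * (f : AddCircle T → ℂ) x) := by
          filter_upwards [Lp.coeFn_smul c f] with x hx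
          simp only [Pi.smul_apply, hx, smul_eq_mul]
          ring
        simp only [RingHom.id_apply]
        rw [MemLp.toLp_congr (memLp_mul hm hb (c • f))
          ((memLp_mul hm hb f).const_smul c) h, MemLp.toLp_const_smul] }
    1
    (fun f => by
      simp only [LinearMap.coe_mk, AddHom.coe_mk, one_mul]
      rw [Lp.norm_toLp]
      have h1 : eLpNorm (fun x => u x * (f : AddCircle T → ℂ) x) 2 μ
          ≤ eLpNorm (f : AddCircle T → ℂ) 2 μ := by
        refine eLpNorm_mono_ae ?_
        filter_upwards [hb] with x hx
        calc ‖u x * (f : AddCircle T → ℂ) x‖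
            = ‖u x‖ * ‖(f : AddCircle T → ℂ) x‖ := norm_mul _ _
          _ ≤ 1 * ‖(f : AddCircle T → ℂ) x‖ := by gcongr
          _ = ‖(f : AddCircle T → ℂ) x‖ := one_mul _
      calc (eLpNorm (fun x => u x * (f : AddCircle T → ℂ) x) 2 μ).toReal
          ≤ (eLpNorm (f : AddCircle T → ℂ) 2 μ).toReal :=
            ENNReal.toReal_mono (Lp.eLpNorm_ne_top f) h1
        _ = ‖f‖ := (Lp.norm_def f).symm)

lemma memLp_conj (f : L2) :
    MemLp (fun x => (starRingEnd ℂ) ((f : AddCircle T → ℂ) x)) 2 μ := by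
  refine (Lp.memLp f).of_le ?_ ?_
  · exact Complex.continuous_conj.comp_aestronglyMeasurable (Lp.aestronglyMeasurable f)
  · filter_upwards with x
    simp

/-- Complex conjugation on `L²`. -/
def conjL2 (f : L2) : L2 := (memLp_conj f).toLp _

/-- The independent variable `z = e^{iθ}` as a function on the circle. -/
def zfun : AddCircle T → ℂ := fun x => fourier 1 x

lemma zfun_meas : AEStronglyMeasurable zfun μ :=
  ((map_continuous (fourier (T := T) 1)).aestronglyMeasurable)

lemma zfun_norm : ∀ᵐ x ∂μ, ‖zfun x‖ ≤ 1 := by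
  filter_upwards with x
  simp [zfun, Circle.norm_coe]

/-- Multiplication by `z` (the bilateral shift `M` on `L²`). -/
def Mz : L2 →L[ℂ] L2 := mulCLM zfun zfun_meas zfun_norm

/-- Multiplication by `conj z`. -/
def Mzbar : L2 →L[ℂ] L2 :=
  mulCLM (fun x => (starRingEnd ℂ) (zfun x))
    (Complex.continuous_conj.comp_aestronglyMeasurable zfun_meas)
    (by filter_upwards with x; simp [zfun, Circle.norm_coe])

/-- The Hardy space `H² = {f ∈ L² : f̂(n) = 0 for all n < 0}`. -/
def H2 : Submodule ℂ L2 where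
  carrier := {f | ∀ n : ℤ, n < 0 → fourierBasis.repr f n = 0}
  add_mem' := by
    intro f g hf hg n hn
    simp [map_add, hf n hn, hg n hn]
  zero_mem' := by intro n hn; simp
  smul_mem' := by
    intro c f hf n hn
    simp [_root_.map_smul, hf n hn]

lemma continuous_coeff (n : ℤ) :
    Continuous fun f : L2 => fourierBasis.repr f n := by
  rw [Metric.continuous_iff]
  intro f ε hε
  refine ⟨ε, hε, fun g hg => ?_⟩
  have h1 : fourierBasis.repr g n - fourierBasis.repr f n = fourierBasis.repr (g - f) n := by
    simp [map_sub]
  have h2 : ‖fourierBasis.repr (g - f) n‖ ≤ ‖fourierBasis.repr (g - f)‖ :=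
    lp.norm_apply_le_norm (by norm_num) _ n
  have h3 : ‖fourierBasis.repr (g - f)‖ = ‖g - f‖ :=
    fourierBasis.repr.norm_map _
  calc dist (fourierBasis.repr g n) (fourierBasis.repr f n)
      = ‖fourierBasis.repr (g - f) n‖ := by rw [dist_eq_norm, h1]
    _ ≤ ‖g - f‖ := by rw [← h3]; exact h2
    _ = dist g f := (dist_eq_norm g f).symm
    _ < ε := hg

lemma H2_isClosed : IsClosed (H2 : Set L2) := by
  have : (H2 : Set L2) =
      ⋂ n ∈ {m : ℤ | m < 0}, {f : L2 | fourierBasis.repr f n = 0} := by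
    ext f
    simp only [Set.mem_iInter, Set.mem_setOf_eq]
    rfl
  rw [this]
  exact isClosed_biInter fun n _ => isClosed_eq (continuous_coeff n) continuous_const

instance : CompleteSpace H2 := H2_isClosed.completeSpace_coe

/-- The Riesz projection `P⁺` of `L²` onto `H²`. -/
def Pp : L2 →L[ℂ] L2 := H2.subtypeL ∘L Submodule.orthogonalProjectionOnto H2

/-- The projection `P⁻ = I − P⁺` of `L²` onto `conj(H²₀)`. -/
def Pm : L2 →L[ℂ] L2 := ContinuousLinearMap.id ℂ L2 - Pp

/-- `conj(H²₀) = {f ∈ L² : f̂(n) = 0 for all n ≥ 0}`, the orthogonal complement of `H²`. -/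
def Hm : Submodule ℂ L2 where
  carrier := {f | ∀ n : ℤ, 0 ≤ n → fourierBasis.repr f n = 0}
  add_mem' := by
    intro f g hf hg n hn
    simp [map_add, hf n hn, hg n hn]
  zero_mem' := by intro n hn; simp
  smul_mem' := by
    intro c f hf n hn
    simp [_root_.map_smul, hf n hn]

/-- The constant function `1` as an element of `L²`. -/
def oneL2 : L2 := (memLp_const (1 : ℂ)).toLp _

/-- An inner function: a bounded measurable unimodular function on the circle whose
negative Fourier coefficients vanish. -/
structure InnerData where
  u : AddCircle T → ℂ
  meas : AEStronglyMeasurable u μ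
  unim : ∀ᵐ x ∂μ, ‖u x‖ = 1
  anal : ∀ n : ℤ, n < 0 → fourierCoeff u n = 0

namespace InnerData

variable (U : InnerData)

lemma bd : ∀ᵐ x ∂μ, ‖U.u x‖ ≤ 1 := by
  filter_upwards [U.unim] with x hx
  rw [hx]

/-- Multiplication by `u`: the operator `M_u` on `L²`. -/
def M : L2 →L[ℂ] L2 := mulCLM U.u U.meas U.bd

/-- Multiplication by `conj u`: the operator `M_{conj u}` on `L²`. -/
def Mc : L2 →L[ℂ] L2 :=
  mulCLM (fun x => (starRingEnd ℂ) (U.u x))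
    (Complex.continuous_conj.comp_aestronglyMeasurable U.meas)
    (by filter_upwards [U.bd] with x hx; simpa using hx)

/-- `u` as an element of `L²`. -/
def toL2 : L2 :=
  (memLp_top_of_bound U.meas 1 U.bd |>.mono_exponent le_top).toLp _

/-- The value `u(0)` of (the analytic extension of) `u` at the origin, i.e. the mean of `u`. -/
def a0 : ℂ := fourierCoeff U.u 0

/-- The subspace `uH²`. -/
def uH2 : Submodule ℂ L2 := Submodule.map (U.M : L2 →ₗ[ℂ] L2) H2

/-- The model space `K_u = H² ∩ (uH²)ᗮ`. -/
def Ku : Submodule ℂ L2 := H2 ⊓ (U.uH2)ᗮ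

lemma Ku_isClosed : IsClosed (U.Ku : Set L2) := by
  have : (U.Ku : Set L2) = (H2 : Set L2) ∩ ((U.uH2)ᗮ : Set L2) := rfl
  rw [this]
  exact H2_isClosed.inter (U.uH2).isClosed_orthogonal

instance : CompleteSpace U.Ku := U.Ku_isClosed.completeSpace_coe

/-- `K_u^⊥`, the orthogonal complement of the model space in `L²`. -/
def KP : Submodule ℂ L2 := (U.Ku)ᗮ

instance : CompleteSpace U.KP := (U.Ku).isClosed_orthogonal.completeSpace_coe

/-- The orthogonal projection `P_u : L² → K_u` (viewed as an operator on `L²`). -/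
def Pu : L2 →L[ℂ] L2 := (U.Ku).subtypeL ∘L Submodule.orthogonalProjectionOnto U.Ku

/-- The dual of the compressed shift: `D_u = (I − P_u) M_z |_{K_u^⊥}`. -/
def Du : U.KP →L[ℂ] U.KP :=
  Submodule.orthogonalProjectionOnto U.KP ∘L Mz ∘L (U.KP).subtypeL

/-- The conjugation `C_u f = u · conj(z f)` on `L²`. -/
def C (f : L2) : L2 := U.M (conjL2 (Mz f))

/-- The reproducing kernel of `K_u` at `0`: `k₀ᵘ = 1 − conj(u(0))·u`. -/
def k0 : L2 := oneL2 - (starRingEnd ℂ) U.a0 • U.toL2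

/-- The similarity `V_u = P⁻ + (conj u/conj u(0)) P⁺` of the paper. -/
def V : L2 →L[ℂ] L2 := Pm + ((starRingEnd ℂ) U.a0)⁻¹ • (U.Mc ∘L Pp)

/-- The inverse similarity `V_u⁻¹ = P⁻ + conj(u(0)) u P⁺`. -/
def Vinv : L2 →L[ℂ] L2 := Pm + (starRingEnd ℂ) U.a0 • (U.M ∘L Pp)

end InnerData

lemma Mz_mem_H2 {f : L2} (hf : f ∈ H2) : Mz f ∈ H2 := by
  intro n hn
  rw [fourierBasis_repr]
  have hcoe : (Mz f : AddCircle T → ℂ) =ᵐ[μ] fun x => zfun x * (f : AddCircle T → ℂ) x :=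
    MemLp.coeFn_toLp (memLp_mul zfun_meas zfun_norm f)
  have h1 : fourierCoeff (Mz f : AddCircle T → ℂ) n
      = fourierCoeff (f : AddCircle T → ℂ) (n - 1) := by
    unfold fourierCoeff
    rw [integral_congr_ae (by filter_upwards [hcoe] with x hx; rw [hx])]
    refine integral_congr_ae ?_
    filter_upwards with x
    have : fourier (-n) x * zfun x = fourier (-(n - 1)) x := by
      unfold zfun
      rw [show (-(n - 1) : ℤ) = -n + 1 by ring, fourier_add]
    simp only [smul_eq_mul]
    calc fourier (-n) x * (zfun x * (f : AddCircle T → ℂ) x)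
        = (fourier (-n) x * zfun x) * (f : AddCircle T → ℂ) x := by ring
      _ = fourier (-(n - 1)) x * (f : AddCircle T → ℂ) x := by rw [this]
  rw [h1]
  have := hf (n - 1) (by omega)
  rwa [fourierBasis_repr] at this

/-- The unilateral shift `S` on `H²`. -/
def Shift : H2 →L[ℂ] H2 :=
  (Mz ∘L H2.subtypeL).codRestrict H2 (fun x => Mz_mem_H2 x.2)

/-!
Since `D_u f = z f - P_u (z f)`, it suffices to show `P_u (z f) = f̂(-1) • k₀ᵘ`, i.e. that
`z f - f̂(-1) • k₀ᵘ` is orthogonal to every `g ∈ K_u`. Split `f = P⁻ f + P⁺ f`. As `f ⊥ K_u` and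
`H² = K_u ⊕ closure (u H²)`, the part `P⁺ f` lies in `closure (u H²)`, which `z` leaves invariant,
so `z P⁺ f ⊥ K_u`. The part `z P⁻ f` has Fourier support in `n ≤ 0` while `g ∈ H²`, so only the
zeroth coefficients meet: `⟪g, z P⁻ f⟫ = conj ĝ(0) · f̂(-1)`, and `⟪g, k₀ᵘ⟫ = conj ĝ(0)` because
`g ⊥ u`.
-/

open scoped InnerProductSpace

theorem _root_.HilbertBasis.inner_eq_conj_repr_mul_repr_of_forall_ne {ι 𝕜 E : Type*} [RCLike 𝕜]
    [NormedAddCommGroup E] [InnerProductSpace 𝕜 E] (b : HilbertBasis ι 𝕜 E) {x y : E} (i : ι)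
    (h : ∀ j ≠ i, b.repr x j = 0 ∨ b.repr y j = 0) :
    ⟪x, y⟫_𝕜 = starRingEnd 𝕜 (b.repr x i) * b.repr y i := by
  have hterm (j : ι) : ⟪x, b j⟫_𝕜 * ⟪b j, y⟫_𝕜 = starRingEnd 𝕜 (b.repr x j) * b.repr y j := by
    rw [b.repr_apply_apply, b.repr_apply_apply, inner_conj_symm]
  rw [← b.tsum_inner_mul_inner, tsum_eq_single i fun j hj => ?_, hterm]
  rcases h j hj with h0 | h0 <;> simp [hterm, h0]

lemma _root_.fourierCoeff_fourier_mul {T : ℝ} [Fact (0 < T)] (f : AddCircle T → ℂ) (k n : ℤ) :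
    fourierCoeff (fun x => fourier k x * f x) n = fourierCoeff f (n - k) := by
  refine integral_congr_ae (Filter.Eventually.of_forall fun x => ?_)
  simp only [smul_eq_mul, ← mul_assoc, ← fourier_add]
  ring_nf

lemma _root_.fourierCoeff_conj {T : ℝ} [Fact (0 < T)] (f : AddCircle T → ℂ) (n : ℤ) :
    fourierCoeff (fun x => starRingEnd ℂ (f x)) n = starRingEnd ℂ (fourierCoeff f (-n)) := by
  rw [fourierCoeff, fourierCoeff, ← integral_conj]
  refine integral_congr_ae (Filter.Eventually.of_forall fun x => ?_)
  simp

lemma mulCLM_coeFn (u : AddCircle T → ℂ) (hm : AEStronglyMeasurable u μ)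
    (hb : ∀ᵐ x ∂μ, ‖u x‖ ≤ 1) (f : L2) :
    (mulCLM u hm hb f : AddCircle T → ℂ) =ᵐ[μ] fun x => u x * f x :=
  MemLp.coeFn_toLp (memLp_mul hm hb f)

lemma Mz_coeFn (f : L2) : (Mz f : AddCircle T → ℂ) =ᵐ[μ] fun x => zfun x * f x :=
  mulCLM_coeFn _ _ _ f

lemma repr_Mz (f : L2) (n : ℤ) :
    fourierBasis.repr (Mz f) n = fourierBasis.repr f (n - 1) := by
  rw [fourierBasis_repr, fourierBasis_repr]
  exact (congrFun (fourierCoeff_congr_ae (Mz_coeFn f)) n).trans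
    (fourierCoeff_fourier_mul _ 1 n)

lemma repr_conjL2 (f : L2) (n : ℤ) :
    fourierBasis.repr (conjL2 f) n = starRingEnd ℂ (fourierBasis.repr f (-n)) := by
  rw [fourierBasis_repr, fourierBasis_repr]
  exact (congrFun (fourierCoeff_congr_ae (MemLp.coeFn_toLp (memLp_conj f))) n).trans
    (fourierCoeff_conj _ n)

lemma fourierBasis_coeFn (n : ℤ) : (fourierBasis n : AddCircle T → ℂ) =ᵐ[μ] fourier n :=
  coe_fourierBasis (T := T) ▸ coeFn_fourierLp 2 n

lemma oneL2_coeFn : (oneL2 : AddCircle T → ℂ) =ᵐ[μ] fun _ => 1 := MemLp.coeFn_toLp _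

lemma oneL2_eq_fourierBasis_zero : oneL2 = fourierBasis 0 := by
  refine Lp.ext ?_
  filter_upwards [oneL2_coeFn, fourierBasis_coeFn 0] with x h1 h2
  rw [h1, h2, fourier_zero]

lemma inner_oneL2 (f : L2) : ⟪f, oneL2⟫_ℂ = starRingEnd ℂ (fourierBasis.repr f 0) := by
  rw [oneL2_eq_fourierBasis_zero, fourierBasis.repr_apply_apply, inner_conj_symm]

lemma fourierBasis_mem_H2 {n : ℤ} (hn : 0 ≤ n) : (fourierBasis n : L2) ∈ H2 := fun m hm => by
  rw [fourierBasis.repr_self, lp.single_apply_ne 2 n _ (by omega)]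

lemma oneL2_mem_H2 : oneL2 ∈ H2 :=
  oneL2_eq_fourierBasis_zero ▸ fourierBasis_mem_H2 le_rfl

lemma repr_eq_zero_of_mem_orthogonal_H2 {w : L2} (hw : w ∈ H2ᗮ) {n : ℤ} (hn : 0 ≤ n) :
    fourierBasis.repr w n = 0 := by
  rw [fourierBasis.repr_apply_apply]
  exact (Submodule.mem_orthogonal _ _).1 hw _ (fourierBasis_mem_H2 hn)

lemma Pp_eq_starProjection : Pp = H2.starProjection := rfl

lemma Pp_mem_H2 (f : L2) : Pp f ∈ H2 := H2.starProjection_apply_mem f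

lemma Pm_apply (f : L2) : Pm f = f - Pp f := rfl

lemma Pm_mem_orthogonal_H2 (f : L2) : Pm f ∈ H2ᗮ :=
  H2.sub_starProjection_mem_orthogonal f

lemma repr_Pm_of_neg (f : L2) {n : ℤ} (hn : n < 0) :
    fourierBasis.repr (Pm f) n = fourierBasis.repr f n := by
  rw [Pm_apply, map_sub, lp.coeFn_sub, Pi.sub_apply, Pp_mem_H2 f n hn, sub_zero]

lemma conj_fourierCoeff_conjL2_Mz_Pm (f : L2) :
    starRingEnd ℂ (fourierCoeff (conjL2 (Mz (Pm f)) : AddCircle T → ℂ) 0)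
      = fourierBasis.repr f (-1) := by
  rw [← fourierBasis_repr, repr_conjL2, Complex.conj_conj, neg_zero, repr_Mz, zero_sub,
    repr_Pm_of_neg f (by norm_num)]

lemma inner_Mz_Pm_of_mem_H2 {g : L2} (hg : g ∈ H2) (f : L2) :
    ⟪g, Mz (Pm f)⟫_ℂ = starRingEnd ℂ (fourierBasis.repr g 0) * fourierBasis.repr f (-1) := by
  rw [fourierBasis.inner_eq_conj_repr_mul_repr_of_forall_ne 0 fun n hn => ?_, repr_Mz, zero_sub,
    repr_Pm_of_neg f (by norm_num)]
  rcases lt_or_gt_of_ne hn with hn | hn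
  · exact Or.inl (hg n hn)
  · right
    rw [repr_Mz]
    exact repr_eq_zero_of_mem_orthogonal_H2 (Pm_mem_orthogonal_H2 f) (by omega)

namespace InnerData

variable (U : InnerData)

lemma M_coeFn (f : L2) : (U.M f : AddCircle T → ℂ) =ᵐ[μ] fun x => U.u x * f x :=
  mulCLM_coeFn _ _ _ f

lemma Mc_coeFn (f : L2) :
    (U.Mc f : AddCircle T → ℂ) =ᵐ[μ] fun x => starRingEnd ℂ (U.u x) * f x :=
  mulCLM_coeFn _ _ _ f

lemma inner_M_right (f g : L2) : ⟪f, U.M g⟫_ℂ = ⟪U.Mc f, g⟫_ℂ := by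
  rw [L2.inner_def, L2.inner_def]
  refine integral_congr_ae ?_
  filter_upwards [U.M_coeFn g, U.Mc_coeFn f] with x hM hMc
  simp only [RCLike.inner_apply, hM, hMc, map_mul, Complex.conj_conj]
  ring

lemma inner_M_M (f g : L2) : ⟪U.M f, U.M g⟫_ℂ = ⟪f, g⟫_ℂ := by
  rw [L2.inner_def, L2.inner_def]
  refine integral_congr_ae ?_
  filter_upwards [U.M_coeFn f, U.M_coeFn g, U.unim] with x hf hg hu
  have hconj : starRingEnd ℂ (U.u x) * U.u x = 1 := by
    rw [Complex.conj_mul', hu]; norm_num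
  simp only [RCLike.inner_apply, hf, hg, map_mul]
  linear_combination (starRingEnd ℂ (f x) * g x) * hconj

lemma repr_Mc_fourierBasis (n m : ℤ) :
    fourierBasis.repr (U.Mc (fourierBasis n)) m = starRingEnd ℂ (fourierCoeff U.u (n - m)) := by
  have hcoe : (U.Mc (fourierBasis n) : AddCircle T → ℂ)
      =ᵐ[μ] fun x => fourier n x * starRingEnd ℂ (U.u x) := by
    filter_upwards [U.Mc_coeFn (fourierBasis n), fourierBasis_coeFn n] with x hMc he
    rw [hMc, he, mul_comm]
  rw [fourierBasis_repr, congrFun (fourierCoeff_congr_ae hcoe), fourierCoeff_fourier_mul,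
    fourierCoeff_conj, neg_sub]

lemma repr_M_of_mem_H2 {h : L2} (hh : h ∈ H2) {n : ℤ} (hn : n ≤ 0) :
    fourierBasis.repr (U.M h) n = fourierCoeff U.u n * fourierBasis.repr h 0 := by
  rw [fourierBasis.repr_apply_apply, inner_M_right,
    fourierBasis.inner_eq_conj_repr_mul_repr_of_forall_ne 0 fun m hm => ?_, repr_Mc_fourierBasis,
    Complex.conj_conj, sub_zero]
  rcases lt_or_gt_of_ne hm with hm | hm
  · exact Or.inr (hh m hm)
  · exact Or.inl (by rw [repr_Mc_fourierBasis, U.anal _ (by omega), map_zero])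

lemma M_mem_H2 {h : L2} (hh : h ∈ H2) : U.M h ∈ H2 := fun n hn => by
  rw [U.repr_M_of_mem_H2 hh hn.le, U.anal n hn, zero_mul]

lemma uH2_le_H2 : U.uH2 ≤ H2 := by
  rintro _ ⟨h, hh, rfl⟩
  exact U.M_mem_H2 hh

lemma toL2_coeFn : (U.toL2 : AddCircle T → ℂ) =ᵐ[μ] U.u := MemLp.coeFn_toLp _

lemma toL2_eq_M_oneL2 : U.toL2 = U.M oneL2 := by
  refine Lp.ext ?_
  filter_upwards [U.toL2_coeFn, U.M_coeFn oneL2, oneL2_coeFn] with x hu hM h1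
  rw [hu, hM, h1, mul_one]

lemma toL2_mem_uH2 : U.toL2 ∈ U.uH2 :=
  U.toL2_eq_M_oneL2 ▸ ⟨oneL2, oneL2_mem_H2, rfl⟩

lemma inner_k0 (f : L2) :
    ⟪f, U.k0⟫_ℂ = starRingEnd ℂ (fourierBasis.repr f 0) - starRingEnd ℂ U.a0 * ⟪f, U.toL2⟫_ℂ := by
  rw [k0, inner_sub_right, inner_smul_right, inner_oneL2]

lemma k0_mem_Ku : U.k0 ∈ U.Ku := by
  refine ⟨H2.sub_mem oneL2_mem_H2 (H2.smul_mem _ ?_), ?_⟩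
  · exact U.uH2_le_H2 U.toL2_mem_uH2
  · rintro _ ⟨h, hh, rfl⟩
    change ⟪U.M h, U.k0⟫_ℂ = 0
    rw [inner_k0, U.repr_M_of_mem_H2 hh le_rfl, toL2_eq_M_oneL2, inner_M_M, inner_oneL2, a0,
      map_mul, sub_self]

lemma inner_k0_of_mem_Ku {g : L2} (hg : g ∈ U.Ku) :
    ⟪g, U.k0⟫_ℂ = starRingEnd ℂ (fourierBasis.repr g 0) := by
  rw [inner_k0, inner_eq_zero_symm.mp (hg.2 _ U.toL2_mem_uH2), mul_zero, sub_zero]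

lemma Mz_M_comm (f : L2) : Mz (U.M f) = U.M (Mz f) := by
  refine Lp.ext ?_
  filter_upwards [Mz_coeFn (U.M f), U.M_coeFn f, U.M_coeFn (Mz f), Mz_coeFn f]
    with x h1 h2 h3 h4
  rw [h1, h2, h3, h4, mul_left_comm]

lemma Mz_mem_uH2 {x : L2} (hx : x ∈ U.uH2) : Mz x ∈ U.uH2 := by
  obtain ⟨h, hh, rfl⟩ := hx
  exact ⟨Mz h, Mz_mem_H2 hh, (U.Mz_M_comm h).symm⟩

lemma Mz_mem_orthogonal_orthogonal_uH2 {x : L2} (hx : x ∈ U.uH2ᗮᗮ) : Mz x ∈ U.uH2ᗮᗮ := by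
  rw [Submodule.orthogonal_orthogonal_eq_closure, ← SetLike.mem_coe,
    Submodule.topologicalClosure_coe] at hx ⊢
  exact Set.MapsTo.closure (fun y hy => U.Mz_mem_uH2 hy) Mz.continuous hx

lemma Pp_mem_orthogonal_orthogonal_uH2 {f : L2} (hf : f ∈ U.KP) : Pp f ∈ U.uH2ᗮᗮ := by
  intro w hw
  have hPw : Pp w ∈ U.Ku := by
    refine ⟨Pp_mem_H2 w, ?_⟩
    rw [← sub_sub_cancel w (Pp w), ← Pm_apply]
    exact Submodule.sub_mem _ hw (Submodule.orthogonal_le U.uH2_le_H2 (Pm_mem_orthogonal_H2 w))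
  rw [Pp_eq_starProjection, ← H2.inner_starProjection_left_eq_right]
  exact hf _ hPw

lemma starProjection_Ku_Mz {f : L2} (hf : f ∈ U.KP) :
    U.Ku.starProjection (Mz f) = fourierBasis.repr f (-1) • U.k0 := by
  refine Submodule.eq_starProjection_of_mem_orthogonal (U.Ku.smul_mem _ U.k0_mem_Ku) ?_
  intro g hg
  have hPp : ⟪g, Mz (Pp f)⟫_ℂ = 0 :=
    U.Mz_mem_orthogonal_orthogonal_uH2 (U.Pp_mem_orthogonal_orthogonal_uH2 hf) g hg.2
  have hsplit : Mz f = Mz (Pm f) + Mz (Pp f) := by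
    rw [← map_add, Pm_apply, sub_add_cancel]
  rw [inner_sub_right, inner_smul_right, hsplit, inner_add_right, hPp, add_zero,
    inner_Mz_Pm_of_mem_H2 hg.1, U.inner_k0_of_mem_Ku hg, mul_comm, sub_self]

end InnerData

/-- `D_u f = z f − conj(φ_f(0))·k₀ᵘ` for `f ∈ K_u^⊥`, where
`φ_f = conj(z)·conj(P⁻ f)` and `φ_f(0)` is its mean (zeroth Fourier coefficient). -/
theorem Du_formula (U : InnerData) (f : U.KP) :
    (U.Du f : L2) = Mz (f : L2)
      - (starRingEnd ℂ)
          (fourierCoeff ((conjL2 (Mz (Pm (f : L2)))) : AddCircle T → ℂ) 0) • U.k0 := by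
  rw [conj_fourierCoeff_conjL2_Mz_Pm, ← U.starProjection_Ku_Mz f.2]
  exact U.Ku.starProjection_orthogonal_val (Mz f)

end Paper
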